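/- For σ > 1 and ε ∈ (0,1), the equation x^{σ−1} + x^{ε−1} − x^{σε−1} = 1 has exactly one solution x in (0,1). -/

import Mathlib

/-!
Dividing by `x`, the equation reads `F x = F (x ^ ε)` for `F y = y - y ^ σ`. This `F` increases
on `(0, c]` and decreases on `[c, 1)`, where `c = σ ^ (-1/(σ-1))` is the zero of `F'`. Since
`x < x ^ ε`, a solution must straddle the peak: `x < c < x ^ ε`, i.e. `x ∈ (c ^ (1/ε), c)`. On that
interval `x ↦ F x - F (x ^ ε)` is strictly increasing, negative at the left end and positive at
the right one, so it has exactly one zero.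
-/

open Set Real

section Unimodal

variable {F : ℝ → ℝ} {c ε : ℝ}

lemma lt_and_lt_rpow_of_apply_eq_apply_rpow (hε : ε ∈ Ioo 0 1)
    (hmono : StrictMonoOn F (Ioc 0 c)) (hanti : StrictAntiOn F (Ico c 1)) {x : ℝ}
    (hx : x ∈ Ioo 0 1) (hFx : F x = F (x ^ ε)) : x < c ∧ c < x ^ ε := by
  have hxε : x < x ^ ε := self_lt_rpow_of_lt_one hx.1 hx.2 hε.2
  have hxε1 : x ^ ε < 1 := rpow_lt_one hx.1.le hx.2 hε.1
  constructor
  · by_contra! h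
    exact (hanti ⟨h, hx.2⟩ ⟨h.trans hxε.le, hxε1⟩ hxε).ne' hFx
  · by_contra! h
    exact (hmono ⟨hx.1, hxε.le.trans h⟩ ⟨rpow_pos_of_pos hx.1 ε, h⟩ hxε).ne hFx

lemma mem_Ioc_and_rpow_mem_Ico_of_mem_Icc (hc : c ∈ Ioo 0 1) (hε : 0 < ε) {x : ℝ}
    (hx : x ∈ Icc (c ^ ε⁻¹) c) : x ∈ Ioc 0 c ∧ x ^ ε ∈ Ico c 1 := by
  have hx0 : 0 < x := (rpow_pos_of_pos hc.1 _).trans_le hx.1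
  exact ⟨⟨hx0, hx.2⟩, (rpow_inv_le_iff_of_pos hc.1.le hx0.le hε).1 hx.1,
    rpow_lt_one hx0.le (hx.2.trans_lt hc.2) hε⟩

lemma strictMonoOn_sub_apply_rpow (hc : c ∈ Ioo 0 1) (hε : 0 < ε)
    (hmono : StrictMonoOn F (Ioc 0 c)) (hanti : StrictAntiOn F (Ico c 1)) :
    StrictMonoOn (fun x => F x - F (x ^ ε)) (Icc (c ^ ε⁻¹) c) := by
  intro x hx y hy hxy
  obtain ⟨hx, hxε⟩ := mem_Ioc_and_rpow_mem_Ico_of_mem_Icc hc hε hx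
  obtain ⟨hy, hyε⟩ := mem_Ioc_and_rpow_mem_Ico_of_mem_Icc hc hε hy
  have hFxy := hmono hx hy hxy
  have hFxyε := hanti hxε hyε (rpow_lt_rpow hx.1.le hxy hε)
  dsimp only
  linarith

theorem existsUnique_apply_eq_apply_rpow (hc : c ∈ Ioo 0 1) (hε : ε ∈ Ioo 0 1)
    (hF : ContinuousOn F (Ioo 0 1)) (hmono : StrictMonoOn F (Ioc 0 c))
    (hanti : StrictAntiOn F (Ico c 1)) :
    ∃! x, x ∈ Ioo 0 1 ∧ F x = F (x ^ ε) := by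
  set a := c ^ ε⁻¹
  have hmem := fun x (hx : x ∈ Icc a c) => mem_Ioc_and_rpow_mem_Ico_of_mem_Icc hc hε.1 hx
  have hac : a < c := rpow_lt_self_of_lt_one hc.1 hc.2 (one_lt_inv₀ hε.1 |>.2 hε.2)
  have hleft : F a - F (a ^ ε) < 0 := by
    rw [rpow_inv_rpow hc.1.le hε.1.ne', sub_neg]
    exact hmono (hmem a ⟨le_rfl, hac.le⟩).1 ⟨hc.1, le_rfl⟩ hac
  have hright : 0 < F c - F (c ^ ε) := by
    have hcε := (hmem c ⟨hac.le, le_rfl⟩).2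
    exact sub_pos.2 <| hanti ⟨le_rfl, hc.2⟩ hcε <| self_lt_rpow_of_lt_one hc.1 hc.2 hε.2
  have hcont : ContinuousOn (fun x => F x - F (x ^ ε)) (Icc a c) := by
    refine (hF.mono fun x hx => ?_).sub
      (hF.comp (continuous_rpow_const hε.1.le).continuousOn fun x hx => ?_)
    · exact ⟨(hmem x hx).1.1, (hmem x hx).1.2.trans_lt hc.2⟩
    · exact ⟨hc.1.trans_le (hmem x hx).2.1, (hmem x hx).2.2⟩
  obtain ⟨x, hx, hroot⟩ := intermediate_value_Ioo hac.le hcont ⟨hleft, hright⟩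
  refine ⟨x, ⟨⟨(hmem x (Ioo_subset_Icc_self hx)).1.1, hx.2.trans hc.2⟩, sub_eq_zero.1 hroot⟩, ?_⟩
  rintro y ⟨hy, hFy⟩
  obtain ⟨hyc, hcy⟩ := lt_and_lt_rpow_of_apply_eq_apply_rpow hε hmono hanti hy hFy
  have hay : a ≤ y := (rpow_inv_le_iff_of_pos hc.1.le hy.1.le hε.1).2 hcy.le
  refine (strictMonoOn_sub_apply_rpow hc hε.1 hmono hanti).injOn ⟨hay, hyc.le⟩
    (Ioo_subset_Icc_self hx) ?_
  simp only [hroot, hFy, sub_self]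

end Unimodal

section SubRpow

variable {σ : ℝ}

lemma inv_rpow_inv_sub_one_mem_Ioo (hσ : 1 < σ) : σ⁻¹ ^ (σ - 1)⁻¹ ∈ Ioo 0 1 :=
  ⟨rpow_pos_of_pos (inv_pos.2 (by linarith)) _,
    rpow_lt_one (inv_nonneg.2 (by linarith)) (inv_lt_one_of_one_lt₀ hσ)
      (inv_pos.2 (sub_pos.2 hσ))⟩

lemma hasDerivAt_sub_rpow (hσ : 1 ≤ σ) (y : ℝ) :
    HasDerivAt (fun y => y - y ^ σ) (1 - σ * y ^ (σ - 1)) y :=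
  (hasDerivAt_id y).sub (hasDerivAt_rpow_const (Or.inr hσ))

lemma strictMonoOn_sub_rpow (hσ : 1 < σ) :
    StrictMonoOn (fun y : ℝ => y - y ^ σ) (Icc 0 (σ⁻¹ ^ (σ - 1)⁻¹)) := by
  refine strictMonoOn_of_deriv_pos (convex_Icc _ _)
    ((continuous_id.sub (continuous_rpow_const (by linarith))).continuousOn) fun y hy => ?_
  rw [interior_Icc] at hy
  rw [(hasDerivAt_sub_rpow hσ.le y).deriv, sub_pos]
  have h := (lt_rpow_inv_iff_of_pos hy.1.le (inv_nonneg.2 (by linarith)) (sub_pos.2 hσ)).1 hy.2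
  calc σ * y ^ (σ - 1) < σ * σ⁻¹ := mul_lt_mul_of_pos_left h (by linarith)
    _ = 1 := mul_inv_cancel₀ (by linarith)

lemma strictAntiOn_sub_rpow (hσ : 1 < σ) :
    StrictAntiOn (fun y : ℝ => y - y ^ σ) (Ici (σ⁻¹ ^ (σ - 1)⁻¹)) := by
  refine strictAntiOn_of_deriv_neg (convex_Ici _)
    ((continuous_id.sub (continuous_rpow_const (by linarith))).continuousOn) fun y hy => ?_
  rw [interior_Ici] at hy
  have hc := inv_rpow_inv_sub_one_mem_Ioo hσ
  rw [(hasDerivAt_sub_rpow hσ.le y).deriv, sub_neg]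
  have h := (rpow_inv_lt_iff_of_pos (inv_nonneg.2 (by linarith)) (hc.1.trans hy).le
    (sub_pos.2 hσ)).1 hy
  calc 1 = σ * σ⁻¹ := (mul_inv_cancel₀ (by linarith)).symm
    _ < σ * y ^ (σ - 1) := mul_lt_mul_of_pos_left h (by linarith)

end SubRpow

lemma rpow_sub_one_add_rpow_sub_one_sub_rpow_sub_one_eq_one_iff {σ ε x : ℝ} (hx : 0 < x) :
    x ^ (σ - 1) + x ^ (ε - 1) - x ^ (σ * ε - 1) = 1 ↔ x - x ^ σ = x ^ ε - (x ^ ε) ^ σ := by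
  rw [rpow_sub_one hx.ne', rpow_sub_one hx.ne', rpow_sub_one hx.ne', ← rpow_mul hx.le,
    mul_comm ε σ]
  field_simp
  constructor <;> intro h <;> linarith

/-- For σ > 1, ε ∈ (0,1), the equation x^{σ−1} + x^{ε−1} − x^{σε−1} = 1
has exactly one solution in (0,1). -/
theorem stmt_4 (σ ε : ℝ) (hσ : 1 < σ) (hε : ε ∈ Set.Ioo (0:ℝ) 1) :
    ∃! x : ℝ, x ∈ Set.Ioo (0:ℝ) 1 ∧
      x ^ (σ - 1) + x ^ (ε - 1) - x ^ (σ * ε - 1) = 1 := by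
  refine (existsUnique_congr fun x => and_congr_right fun hx =>
    rpow_sub_one_add_rpow_sub_one_sub_rpow_sub_one_eq_one_iff hx.1).2 ?_
  exact existsUnique_apply_eq_apply_rpow (inv_rpow_inv_sub_one_mem_Ioo hσ) hε
    (continuous_id.sub (continuous_rpow_const (by linarith))).continuousOn
    ((strictMonoOn_sub_rpow hσ).mono Ioc_subset_Icc_self)
    ((strictAntiOn_sub_rpow hσ).mono Ico_subset_Ici_self)
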